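/- arXiv:2604.04397 — 2 statements merged into one kernel-verified Lean document; each statement's English description precedes it below -/
import Mathlib

section
/- Let A be a C*-algebra and x ∈ A. Then x = b·c where b = (x x*)^{1/4} and c = lim_{n→∞} (1/n + x x*)^{-1/4} x (the limit exists in norm), and moreover ‖b‖² = ‖x‖ = ‖c‖². -/
open Filter Topology

/-!
Work in a unital C⋆-algebra (the unitization of `A`) with `a = y y⋆`. For a real function `h`,
`(h(a) y)(h(a) y)⋆ = h(a) a h(a) = k(a)²` with `k(t) = √t h(t)`, so `‖h(a) y‖ = ‖k(a)‖`.
For `h = (1/n + ·)^{-1/4}` the functions `k_n` converge to `t^{1/4}` uniformly on `[0, ∞)`,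
with error at most `n^{-1/4}`. Hence the approximants `h_n(a) y` form a Cauchy sequence whose
limit `c` satisfies `c c⋆ = lim k_n(a)² = b²` for `b = a^{1/4}`, and
`‖b h_n(a) y - y‖ = ‖b (k_n(a) - b)‖ → 0` gives `y = b c`. Finally
`‖b‖² = ‖b²‖ = ‖√a‖ = ‖y‖` by the same identity with `h = 1`, and `‖c‖² = ‖c c⋆‖ = ‖b²‖`.
-/

namespace Real

/-- The difference is `-t ^ p ((s + t) ^ p - t ^ p) / (s + t) ^ p`, and `t ↦ t ^ p` is
subadditive. -/
lemma abs_rpow_two_mul_mul_add_rpow_neg_sub_rpow_le {p s t : ℝ} (hp₀ : 0 ≤ p) (hp₁ : p ≤ 1)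
    (hs : 0 < s) (ht : 0 ≤ t) : |t ^ (2 * p) * (s + t) ^ (-p) - t ^ p| ≤ s ^ p := by
  have hst : 0 < s + t := by positivity
  set u := t ^ p
  set v := (s + t) ^ p
  have hv : 0 < v := rpow_pos_of_pos hst p
  have huv : u ≤ v := rpow_le_rpow ht (by linarith) hp₀
  have hvu : v ≤ s ^ p + u := rpow_add_le_add_rpow hs.le ht hp₀ hp₁
  have key : t ^ (2 * p) * (s + t) ^ (-p) - u = -(u / v * (v - u)) := by
    rw [mul_comm 2 p, rpow_mul ht, rpow_two, rpow_neg hst.le]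
    field_simp
    ring
  rw [key, abs_neg, abs_of_nonneg (mul_nonneg (by positivity) (sub_nonneg.2 huv))]
  calc u / v * (v - u) ≤ 1 * (v - u) :=
        mul_le_mul_of_nonneg_right (div_le_one_of_le₀ huv hv.le) (sub_nonneg.2 huv)
    _ ≤ s ^ p := by linarith

lemma tendstoUniformlyOn_sqrt_mul_one_div_add_rpow_neg_quarter :
    TendstoUniformlyOn (fun (n : ℕ) (t : ℝ) => √t * (1 / (n : ℝ) + t) ^ (-(1 / 4 : ℝ)))
      (fun t => t ^ (1 / 4 : ℝ)) atTop (Set.Ici 0) := by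
  have hbound : Tendsto (fun n : ℕ => (1 / (n : ℝ)) ^ (1 / 4 : ℝ)) atTop (𝓝 0) := by
    simpa [Function.comp_def] using
      ((continuous_rpow_const (by norm_num : (0 : ℝ) ≤ 1 / 4)).tendsto 0).comp
        tendsto_one_div_atTop_nhds_zero_nat
  rw [Metric.tendstoUniformlyOn_iff]
  intro ε hε
  filter_upwards [hbound.eventually (gt_mem_nhds hε), eventually_ge_atTop 1]
    with n hn hn₁ t ht
  have h := abs_rpow_two_mul_mul_add_rpow_neg_sub_rpow_le (p := 1 / 4) (by norm_num)
    (by norm_num) (by positivity : (0 : ℝ) < 1 / n) (Set.mem_Ici.1 ht)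
  rw [show (2 : ℝ) * (1 / 4) = 1 / 2 by norm_num, ← sqrt_eq_rpow] at h
  rw [dist_comm, dist_eq]
  exact h.trans_lt hn

lemma sqrt_eq_rpow_quarter_mul_self {t : ℝ} (ht : 0 ≤ t) :
    √t = t ^ (1 / 4 : ℝ) * t ^ (1 / 4 : ℝ) := by
  rw [← rpow_add' ht (by norm_num), sqrt_eq_rpow]
  norm_num

end Real

section CStarAlgebra

variable {B : Type*} [CStarAlgebra B]

lemma spectrum_mul_star_self_subset_Ici (y : B) : spectrum ℝ (y * star y) ⊆ Set.Ici 0 :=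
  fun t ht => spectrum_star_mul_self_nonneg (b := star y) t (by rwa [star_star])

lemma continuousOn_one_div_add_rpow_spectrum_mul_star_self (y : B) {n : ℕ} (hn : n ≠ 0)
    (r : ℝ) :
    ContinuousOn (fun t : ℝ => (1 / (n : ℝ) + t) ^ r) (spectrum ℝ (y * star y)) :=
  (continuousOn_const.add continuousOn_id).rpow_const fun _ ht => Or.inl <|
    (add_pos_of_pos_of_nonneg (by positivity) (spectrum_mul_star_self_subset_Ici y ht)).ne'

lemma cfc_mul_mul_star_cfc_mul (y : B) {h : ℝ → ℝ}
    (hh : ContinuousOn h (spectrum ℝ (y * star y))) :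
    cfc h (y * star y) * y * star (cfc h (y * star y) * y) =
      cfc (fun t => √t * h t) (y * star y) * cfc (fun t => √t * h t) (y * star y) := by
  rw [star_mul, (cfc_predicate h (y * star y)).star_eq]
  calc cfc h (y * star y) * y * (star y * cfc h (y * star y))
      = cfc h (y * star y) * cfc (fun t => t) (y * star y) * cfc h (y * star y) := by
        rw [cfc_id' ℝ (y * star y)]; simp only [mul_assoc]
    _ = cfc (fun t => (√t * h t) * (√t * h t)) (y * star y) := by
        rw [← cfc_mul _ (fun t => t) _ hh continuousOn_id,
          ← cfc_mul (fun t => h t * t) h _ (hh.mul continuousOn_id) hh]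
        refine cfc_congr fun t ht => ?_
        have := Real.mul_self_sqrt (spectrum_mul_star_self_subset_Ici y ht)
        linear_combination (-h t * h t) * this
    _ = _ := by
        have hk : ContinuousOn (fun t => √t * h t) (spectrum ℝ (y * star y)) :=
          Real.continuous_sqrt.continuousOn.mul hh
        rw [cfc_mul _ _ _ hk hk]

lemma norm_cfc_mul_eq_norm_cfc_sqrt_mul (y : B) {h : ℝ → ℝ}
    (hh : ContinuousOn h (spectrum ℝ (y * star y))) :
    ‖cfc h (y * star y) * y‖ = ‖cfc (fun t => √t * h t) (y * star y)‖ := by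
  have hsa : IsSelfAdjoint (cfc (fun t => √t * h t) (y * star y)) := cfc_predicate _ _
  have := congrArg norm (cfc_mul_mul_star_cfc_mul y hh)
  rw [CStarRing.norm_self_mul_star, hsa.norm_mul_self, ← sq] at this
  exact (pow_left_inj₀ (norm_nonneg _) (norm_nonneg _) two_ne_zero).1 this

lemma tendsto_cfc_sqrt_mul_one_div_add_rpow_neg_quarter (y : B) :
    Tendsto (fun n : ℕ => cfc (fun t => √t * (1 / (n : ℝ) + t) ^ (-(1 / 4 : ℝ))) (y * star y))
      atTop (𝓝 (cfc (fun t : ℝ => t ^ (1 / 4 : ℝ)) (y * star y))) := by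
  refine tendsto_cfc_fun (Real.tendstoUniformlyOn_sqrt_mul_one_div_add_rpow_neg_quarter.mono
    (spectrum_mul_star_self_subset_Ici y)) ?_
  filter_upwards [eventually_ne_atTop 0] with n hn
  exact Real.continuous_sqrt.continuousOn.mul
    (continuousOn_one_div_add_rpow_spectrum_mul_star_self y hn _)

lemma cauchySeq_cfc_one_div_add_rpow_neg_quarter_mul (y : B) :
    CauchySeq fun n : ℕ =>
      cfc (fun t : ℝ => (1 / (n : ℝ) + t) ^ (-(1 / 4 : ℝ))) (y * star y) * y := by
  have hk := (tendsto_cfc_sqrt_mul_one_div_add_rpow_neg_quarter y).cauchySeq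
  rw [cauchySeq_iff_tendsto_dist_atTop_0] at hk ⊢
  refine hk.congr' ?_
  filter_upwards [eventually_ge_atTop (1, 1)] with ⟨n, m⟩ ⟨hn, hm⟩
  dsimp only at hn hm ⊢
  symm
  have hfn := continuousOn_one_div_add_rpow_spectrum_mul_star_self y
    (Nat.one_le_iff_ne_zero.1 hn) (-(1 / 4))
  have hfm := continuousOn_one_div_add_rpow_spectrum_mul_star_self y
    (Nat.one_le_iff_ne_zero.1 hm) (-(1 / 4))
  have hsqrt := Real.continuous_sqrt.continuousOn (s := spectrum ℝ (y * star y))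
  rw [dist_eq_norm, dist_eq_norm, ← sub_mul, ← cfc_sub _ _ _ hfn hfm,
    norm_cfc_mul_eq_norm_cfc_sqrt_mul y (h := fun t => _ - _) (hfn.sub hfm),
    ← cfc_sub (fun t => √t * _) (fun t => √t * _) _ (hsqrt.mul hfn) (hsqrt.mul hfm)]
  simp only [mul_sub]

lemma norm_cfc_rpow_quarter_mul_sub_le (y : B) {n : ℕ} (hn : n ≠ 0) :
    ‖cfc (fun t : ℝ => t ^ (1 / 4 : ℝ)) (y * star y) *
        (cfc (fun t : ℝ => (1 / (n : ℝ) + t) ^ (-(1 / 4 : ℝ))) (y * star y) * y) - y‖ ≤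
      ‖cfc (fun t : ℝ => t ^ (1 / 4 : ℝ)) (y * star y)‖ *
        ‖cfc (fun t => √t * (1 / (n : ℝ) + t) ^ (-(1 / 4 : ℝ))) (y * star y) -
          cfc (fun t : ℝ => t ^ (1 / 4 : ℝ)) (y * star y)‖ := by
  have hq := (Real.continuous_rpow_const (by norm_num : (0 : ℝ) ≤ 1 / 4)).continuousOn
    (s := spectrum ℝ (y * star y))
  have hsqrt := Real.continuous_sqrt.continuousOn (s := spectrum ℝ (y * star y))
  have hf := continuousOn_one_div_add_rpow_spectrum_mul_star_self y hn (-(1 / 4))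
  have hfactor : cfc (fun t : ℝ => t ^ (1 / 4 : ℝ)) (y * star y) *
      (cfc (fun t : ℝ => (1 / (n : ℝ) + t) ^ (-(1 / 4 : ℝ))) (y * star y) * y) - y =
      cfc (fun t : ℝ => t ^ (1 / 4 : ℝ) * (1 / (n : ℝ) + t) ^ (-(1 / 4 : ℝ)) - 1) (y * star y) *
        y := by
    rw [cfc_sub (fun t : ℝ => t ^ (1 / 4 : ℝ) * _) _ _ (hq.mul hf) continuousOn_const,
      cfc_const_one ℝ (y * star y), cfc_mul (fun t : ℝ => t ^ (1 / 4 : ℝ)) _ _ hq hf, sub_mul,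
      one_mul, mul_assoc]
  have hsqrt_mul : cfc (fun t => √t * (t ^ (1 / 4 : ℝ) * (1 / (n : ℝ) + t) ^ (-(1 / 4 : ℝ)) - 1))
      (y * star y) = cfc (fun t : ℝ => t ^ (1 / 4 : ℝ)) (y * star y) *
        (cfc (fun t => √t * (1 / (n : ℝ) + t) ^ (-(1 / 4 : ℝ))) (y * star y) -
          cfc (fun t : ℝ => t ^ (1 / 4 : ℝ)) (y * star y)) := by
    rw [← cfc_sub (fun t => √t * _) _ _ (hsqrt.mul hf) hq,
      ← cfc_mul (fun t : ℝ => t ^ (1 / 4 : ℝ)) (fun t => √t * _ - _) _ hq ((hsqrt.mul hf).sub hq)]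
    refine cfc_congr fun t ht => ?_
    rw [Real.sqrt_eq_rpow_quarter_mul_self (spectrum_mul_star_self_subset_Ici y ht)]
    ring
  have hg : ContinuousOn (fun t : ℝ => t ^ (1 / 4 : ℝ) * (1 / (n : ℝ) + t) ^ (-(1 / 4 : ℝ)) - 1)
      (spectrum ℝ (y * star y)) := (hq.mul hf).sub continuousOn_const
  rw [hfactor, norm_cfc_mul_eq_norm_cfc_sqrt_mul y hg, hsqrt_mul]
  exact norm_mul_le _ _

lemma cfc_rpow_quarter_mul_self (y : B) :
    cfc (fun t : ℝ => t ^ (1 / 4 : ℝ)) (y * star y) *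
      cfc (fun t : ℝ => t ^ (1 / 4 : ℝ)) (y * star y) = cfc (fun t => √t) (y * star y) := by
  have hq := (Real.continuous_rpow_const (by norm_num : (0 : ℝ) ≤ 1 / 4)).continuousOn
    (s := spectrum ℝ (y * star y))
  rw [← cfc_mul _ _ _ hq hq]
  exact cfc_congr fun t ht =>
    (Real.sqrt_eq_rpow_quarter_mul_self (spectrum_mul_star_self_subset_Ici y ht)).symm

lemma sq_norm_cfc_rpow_quarter (y : B) :
    ‖cfc (fun t : ℝ => t ^ (1 / 4 : ℝ)) (y * star y)‖ ^ 2 = ‖y‖ := by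
  have hb : IsSelfAdjoint (cfc (fun t : ℝ => t ^ (1 / 4 : ℝ)) (y * star y)) := cfc_predicate _ _
  calc _ = ‖cfc (fun t => √t * 1) (y * star y)‖ := by
        rw [← hb.norm_mul_self, cfc_rpow_quarter_mul_self]
        simp only [mul_one]
    _ = ‖cfc (fun _ => (1 : ℝ)) (y * star y) * y‖ :=
        (norm_cfc_mul_eq_norm_cfc_sqrt_mul y continuousOn_const).symm
    _ = ‖y‖ := by rw [cfc_const_one ℝ (y * star y), one_mul]

lemma tendsto_cfc_rpow_quarter_mul_cfc_one_div_add_rpow_neg_quarter_mul (y : B) :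
    Tendsto (fun n : ℕ => cfc (fun t : ℝ => t ^ (1 / 4 : ℝ)) (y * star y) *
      (cfc (fun t : ℝ => (1 / (n : ℝ) + t) ^ (-(1 / 4 : ℝ))) (y * star y) * y)) atTop (𝓝 y) := by
  set b := cfc (fun t : ℝ => t ^ (1 / 4 : ℝ)) (y * star y)
  have hbk : Tendsto (fun n : ℕ => ‖b‖ *
      ‖cfc (fun t => √t * (1 / (n : ℝ) + t) ^ (-(1 / 4 : ℝ))) (y * star y) - b‖) atTop (𝓝 0) := by
    simpa only [mul_zero] using (tendsto_iff_norm_sub_tendsto_zero.1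
      (tendsto_cfc_sqrt_mul_one_div_add_rpow_neg_quarter y)).const_mul ‖b‖
  rw [tendsto_iff_norm_sub_tendsto_zero]
  refine squeeze_zero_norm' ?_ hbk
  filter_upwards [eventually_ne_atTop 0] with n hn
  rw [norm_norm]
  exact norm_cfc_rpow_quarter_mul_sub_le y hn

theorem exists_tendsto_cfc_one_div_add_rpow_neg_quarter_mul (y : B) :
    ∃ c : B,
      Tendsto (fun n : ℕ => cfc (fun t : ℝ => (1 / (n : ℝ) + t) ^ (-(1 / 4 : ℝ))) (y * star y) * y)
        atTop (𝓝 c) ∧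
      y = cfc (fun t : ℝ => t ^ (1 / 4 : ℝ)) (y * star y) * c ∧
      ‖cfc (fun t : ℝ => t ^ (1 / 4 : ℝ)) (y * star y)‖ ^ 2 = ‖y‖ ∧
      ‖c‖ ^ 2 = ‖y‖ := by
  set b := cfc (fun t : ℝ => t ^ (1 / 4 : ℝ)) (y * star y)
  obtain ⟨c, hc⟩ :=
    cauchySeq_tendsto_of_complete (cauchySeq_cfc_one_div_add_rpow_neg_quarter_mul y)
  have hk := tendsto_cfc_sqrt_mul_one_div_add_rpow_neg_quarter y
  have hb : IsSelfAdjoint b := cfc_predicate _ _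
  have hbc : y = b * c := tendsto_nhds_unique
    (tendsto_cfc_rpow_quarter_mul_cfc_one_div_add_rpow_neg_quarter_mul y) (hc.const_mul b)
  have hcc : c * star c = b * b := by
    refine tendsto_nhds_unique (hc.mul hc.star) ((hk.mul hk).congr' ?_)
    filter_upwards [eventually_ne_atTop 0] with n hn
    exact (cfc_mul_mul_star_cfc_mul y
      (continuousOn_one_div_add_rpow_spectrum_mul_star_self y hn _)).symm
  refine ⟨c, hc, hbc, sq_norm_cfc_rpow_quarter y, ?_⟩
  rw [sq, ← CStarRing.norm_self_mul_star, hcc, hb.norm_mul_self, sq_norm_cfc_rpow_quarter]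

end CStarAlgebra

lemma Unitization.mul_inr_mem_range_inr {R A : Type*} [CommSemiring R] [NonUnitalSemiring A]
    [Module R A] [IsScalarTower R A A] [SMulCommClass R A A] (z : Unitization R A) (x : A) :
    z * (x : Unitization R A) ∈ Set.range ((↑) : A → Unitization R A) := by
  refine ⟨z.fst • x + z.snd * x, ?_⟩
  conv_rhs => rw [← Unitization.inl_fst_add_inr_snd_eq z]
  rw [add_mul, Unitization.inl_mul_inr, Unitization.inr_add, Unitization.inr_mul]

/-- Let `A` be a C*-algebra and `x ∈ A`.  Then `x = b·c`, where
`b = (x x*)^{1/4}` (defined by the nonunital continuous functional calculus) and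
`c = lim_{n→∞} (1/n + x x*)^{-1/4} x`, the limit existing in norm.  The terms
`(1/n + x x*)^{-1/4} x` are computed in the unitization of `A`, but the limit `c` lies in `A`.
Moreover `‖b‖² = ‖x‖ = ‖c‖²`. -/
theorem cstar_factorization
    {A : Type*} [NonUnitalCStarAlgebra A] (x : A) :
    ∃ c : A,
      Tendsto
        (fun n : ℕ =>
          cfc (fun t : ℝ => (1 / (n : ℝ) + t) ^ (-(1 / 4 : ℝ)))
              ((x * star x : A) : Unitization ℂ A) * (x : Unitization ℂ A))
        atTop (𝓝 (c : Unitization ℂ A)) ∧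
      x = cfcₙ (fun t : ℝ => t ^ (1 / 4 : ℝ)) (x * star x) * c ∧
      ‖cfcₙ (fun t : ℝ => t ^ (1 / 4 : ℝ)) (x * star x)‖ ^ 2 = ‖x‖ ∧
      ‖c‖ ^ 2 = ‖x‖ := by
  have hxx : ((x * star x : A) : Unitization ℂ A) =
      (x : Unitization ℂ A) * star (x : Unitization ℂ A) := by
    rw [Unitization.inr_mul, Unitization.inr_star]
  have hb : ((cfcₙ (fun t : ℝ => t ^ (1 / 4 : ℝ)) (x * star x) : A) : Unitization ℂ A) =
      cfc (fun t : ℝ => t ^ (1 / 4 : ℝ)) ((x * star x : A) : Unitization ℂ A) :=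
    Unitization.real_cfcₙ_eq_cfc_inr _ _ (Real.zero_rpow (by norm_num))
  obtain ⟨c', hlim, hfac, hbnorm, hcnorm⟩ :=
    exists_tendsto_cfc_one_div_add_rpow_neg_quarter_mul (x : Unitization ℂ A)
  rw [← hxx] at hlim hfac hbnorm
  obtain ⟨c, rfl⟩ : c' ∈ Set.range ((↑) : A → Unitization ℂ A) :=
    Unitization.isometry_inr.isClosedEmbedding.isClosed_range.mem_of_tendsto hlim
      (Eventually.of_forall fun _ => Unitization.mul_inr_mem_range_inr _ x)
  rw [← hb, ← Unitization.inr_mul] at hfac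
  rw [← hb, Unitization.norm_inr, Unitization.norm_inr] at hbnorm
  rw [Unitization.norm_inr, Unitization.norm_inr] at hcnorm
  exact ⟨c, hlim, Unitization.inr_injective hfac, hbnorm, hcnorm⟩
end

section
/- Let G be a groupoid with Haar system, ν a measure on G⁰, and X₁'' ⊆ G a subset such that X₁'' ∩ inv(X₁'') is conull for ν∘α (where inv is the inversion map). Let X₀ be the set of all x ∈ G⁰ such that g ∈ X₁'' ∩ inv(X₁'') for α^x-almost all g ∈ G^x; then X₀ is ν-conull. Assume further that X₁'' has the property: if k ∈ G and there is a sequence (h_n) in G^{r(k)} with h_n, h_n⁻¹k ∈ X₁'' and h_n → u(r(k)), then k ∈ X₁''. Then G|_{X₀} := {g ∈ G : r(g), s(g) ∈ X₀} ⊆ X₁''. -/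
/-
Fubini (disintegrating `ν∘α` along `ν`) gives that `X₀` is conull. For the inclusion, let
`k : z ⟶ x` with `x, z ∈ X₀` and write `S = X₁'' ∩ inv(X₁'')`. Almost every `h ∈ G^x` lies in
`S`, and by left invariance (translating by `k⁻¹`) almost every `h ∈ G^x` also has
`k⁻¹h ∈ S`, hence `h⁻¹k ∈ X₁''`. Since `α^x` has full support, such `h` accumulate at the
unit `u(x)`; a sequence of them witnesses `k ∈ X₁''` by the closure property.
-/

open CategoryTheory MeasureTheory Filter Topology

universe u v

variable {Obj : Type u} [Groupoid.{v} Obj]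

attribute [local instance] Classical.propDecidable

/-- The total arrow space of a groupoid, as a sigma type; an arrow `g : z ⟶ x` has source
`s g = z` and range `r g = x`. -/
def GArr (Obj : Type u) [Groupoid.{v} Obj] : Type max u v := (z : Obj) × (x : Obj) × (z ⟶ x)

/-- An arrow as a point of the total arrow space. -/
def GArr.mk {z x : Obj} (g : z ⟶ x) : GArr Obj := ⟨z, x, g⟩

/-- The inversion map of the groupoid on its total arrow space. -/
def GArr.ginv : GArr Obj → GArr Obj := fun p => ⟨p.2.1, p.1, Groupoid.inv p.2.2⟩

/-- Left translation by `g : x ⟶ y` on the total arrow space: it maps the fibre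
`G^x = r⁻¹(x)` to `G^y` by `h ↦ g·h = h ≫ g`, and is the identity elsewhere. -/
noncomputable def GArr.transl {x y : Obj} (g : x ⟶ y) : GArr Obj → GArr Obj := fun p =>
  if h : p.2.1 = x then ⟨p.1, y, (show p.1 ⟶ x from h ▸ p.2.2) ≫ g⟩ else p

theorem exists_seq_tendsto_of_ae_of_forall_isOpen_measure_pos {X : Type*} [TopologicalSpace X]
    [FrechetUrysohnSpace X] [MeasurableSpace X] {μ : Measure X} {a : X} {P : X → Prop}
    (hpos : ∀ U : Set X, IsOpen U → a ∈ U → 0 < μ U) (hP : ∀ᵐ p ∂μ, P p) :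
    ∃ u : ℕ → X, (∀ n, P (u n)) ∧ Tendsto u atTop (𝓝 a) := by
  refine mem_closure_iff_seq_limit.1 (mem_closure_iff.2 fun U hU haU => ?_)
  obtain ⟨p, hpU, hp⟩ :=
    ((frequently_ae_mem_iff.2 (hpos U hU haU).ne').and_eventually hP).exists
  exact ⟨p, hpU, hp⟩

namespace GArr

lemma ginv_transl_inv {z x : Obj} (k : z ⟶ x) (p : GArr Obj) (e : p.2.1 = x) :
    ginv (transl (Groupoid.inv k) p) = mk (k ≫ Groupoid.inv (show p.1 ⟶ x from e ▸ p.2.2)) := by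
  obtain ⟨w, x, g⟩ := p
  subst e
  simp only [transl, ginv, mk]
  erw [dif_pos rfl]
  simp only [Groupoid.inv_eq_inv, IsIso.inv_comp, IsIso.inv_inv]
  rfl

end GArr

/-- Let `G` be a (second countable, locally compact, Hausdorff) groupoid
with Haar system `α`, `ν` a measure on `G⁰`, and `X₁'' ⊆ G` a subset such that
`X₁'' ∩ inv(X₁'')` is conull for `ν∘α`.  Let `X₀` be the set of all `x ∈ G⁰` such that
`g ∈ X₁'' ∩ inv(X₁'')` for `α^x`-almost all `g ∈ G^x`; then `X₀` is `ν`-conull.  Assume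
further that `X₁''` has the property: if `k ∈ G` and there is a sequence `(h_n)` in
`G^{r(k)}` with `h_n, h_n⁻¹k ∈ X₁''` and `h_n → u(r(k))`, then `k ∈ X₁''`.  Then
`G|_{X₀} = {g : r(g), s(g) ∈ X₀} ⊆ X₁''`. -/
theorem ramsay_conull_lemma
    [TopologicalSpace (GArr Obj)] [FirstCountableTopology (GArr Obj)]
    [MeasurableSpace (GArr Obj)] [MeasurableSpace Obj]
    (ν : Measure Obj) (α : Obj → Measure (GArr Obj)) (hα : Measurable α)
    -- Haar system axioms: concentration on the fibres, left invariance, full support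
    (hconc : ∀ x : Obj, α x {p : GArr Obj | p.2.1 ≠ x} = 0)
    (hinv : ∀ {x y : Obj} (g : x ⟶ y), (α x).map (GArr.transl g) = α y)
    (hfull : ∀ (x : Obj) (U : Set (GArr Obj)), IsOpen U → (∃ p ∈ U, p.2.1 = x) → 0 < α x U)
    (X₁ : Set (GArr Obj))
    -- `X₁'' ∩ inv (X₁'')` is conull for `ν ∘ α`
    (hconull : (ν.bind α) ((X₁ ∩ GArr.ginv ⁻¹' X₁)ᶜ) = 0)
    -- the closure property of `X₁''`
    (hclosure : ∀ {z x : Obj} (k : z ⟶ x),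
      (∃ hseq : ℕ → GArr Obj,
        (∀ n, (hseq n).2.1 = x) ∧
        (∀ n, hseq n ∈ X₁) ∧
        (∀ n (e : (hseq n).2.1 = x),
          GArr.mk (k ≫ Groupoid.inv (show (hseq n).1 ⟶ x from e ▸ (hseq n).2.2)) ∈ X₁) ∧
        Tendsto hseq atTop (𝓝 (GArr.mk (𝟙 x)))) →
      GArr.mk k ∈ X₁) :
    -- `X₀` is `ν`-conull and `G|_{X₀} ⊆ X₁''`
    ν {x : Obj | ¬ α x ((X₁ ∩ GArr.ginv ⁻¹' X₁)ᶜ) = 0} = 0 ∧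
    ∀ {z x : Obj} (k : z ⟶ x),
      α x ((X₁ ∩ GArr.ginv ⁻¹' X₁)ᶜ) = 0 →
      α z ((X₁ ∩ GArr.ginv ⁻¹' X₁)ᶜ) = 0 →
      GArr.mk k ∈ X₁ := by
  set S := X₁ ∩ GArr.ginv ⁻¹' X₁
  refine ⟨ae_iff.1 ?_, fun {z x} k hx hz => ?_⟩
  · exact (Measure.ae_ae_of_ae_bind hα.aemeasurable (ae_iff.2 hconull)).mono
      fun _ h => ae_iff.1 h
  have hz_ne : α z ≠ 0 := fun h => by
    simpa [h] using hfull z _ isOpen_univ ⟨GArr.mk (𝟙 z), trivial, rfl⟩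
  have hk : ∀ᵐ p ∂α x, GArr.transl (Groupoid.inv k) p ∈ S := by
    rw [← hinv (Groupoid.inv k)] at hz hz_ne
    exact ae_of_ae_map (AEMeasurable.of_map_ne_zero hz_ne) (ae_iff.2 hz)
  have hfib : ∀ᵐ p ∂α x, p.2.1 = x := ae_iff.2 (hconc x)
  obtain ⟨h, hS, hlim⟩ := exists_seq_tendsto_of_ae_of_forall_isOpen_measure_pos
    (fun U hU hxU => hfull x U hU ⟨GArr.mk (𝟙 x), hxU, rfl⟩)
    ((ae_iff.2 hx : ∀ᵐ p ∂α x, p ∈ S).and (hk.and hfib))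
  refine hclosure k ⟨h, fun n => (hS n).2.2, fun n => (hS n).1.1, fun n e => ?_, hlim⟩
  exact GArr.ginv_transl_inv k _ e ▸ (hS n).2.1.2
end
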